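/- arXiv:math/9911174 — 6 statements merged into one kernel-verified Lean document; each statement's English description precedes it below -/
import Mathlib

section
/- In a free group, every nontrivial element has a centralizer that is an infinite cyclic group. -/
/-!
By Nielsen–Schreier the centralizer of `w` is itself a free group, and `w` is a nontrivial
element of its centre. A free group on at least two generators has trivial centre: conjugating a
nontrivial reduced word by a letter whose generator differs from that of its last letter yields a
longer reduced word. Hence the centralizer is free on exactly one generator, i.e. infinite cyclic.
-/

namespace FreeGroup

variable {α : Type*}

theorem IsReduced.cons_append_singleton {L : List (α × Bool)} (hL : IsReduced L) (hne : L ≠ [])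
    {a b : α × Bool} (ha : ∀ p ∈ L.head?, a.1 = p.1 → a.2 = p.2)
    (hb : ∀ q ∈ L.getLast?, q.1 = b.1 → q.2 = b.2) :
    IsReduced (a :: L ++ [b]) := by
  have hcons : IsReduced ([a] ++ L) := List.isChain_cons.mpr ⟨ha, hL⟩
  have happ : IsReduced (L ++ [b]) :=
    List.isChain_append.mpr ⟨hL, List.isChain_singleton b, fun q hq b' hb' => by
      obtain rfl : b' = b := by simpa using hb'.symm
      exact hb q hq⟩
  exact hcons.append_overlap happ hne

theorem center_eq_bot [Nontrivial α] : Subgroup.center (FreeGroup α) = ⊥ := by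
  classical
  refine (Subgroup.eq_bot_iff_forall _).mpr fun x hx => ?_
  by_contra hx1
  have hne : x.toWord ≠ [] := fun h => hx1 (toWord_eq_nil_iff.mp h)
  obtain ⟨p, hp⟩ := Option.ne_none_iff_exists'.mp (List.head?_eq_none_iff.not.mpr hne)
  obtain ⟨q, hq⟩ := Option.ne_none_iff_exists'.mp (List.getLast?_eq_none_iff.not.mpr hne)
  obtain ⟨c, hc⟩ := exists_ne q.1
  have hred : IsReduced ((c, p.2) :: x.toWord ++ [(c, !p.2)]) := by
    refine isReduced_toWord.cons_append_singleton hne ?_ ?_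
    · rintro p' hp' -
      rw [hp, Option.mem_some_iff] at hp'
      rw [hp']
    · rintro q' hq' h
      rw [hq, Option.mem_some_iff] at hq'
      exact (hc (hq' ▸ h).symm).elim
  have hconj : mk [(c, p.2)] * x * mk [(c, !p.2)] = x := by
    have hinv : (mk [(c, p.2)])⁻¹ = mk [(c, !p.2)] := by simp [inv_mk, invRev]
    rw [← hinv, Subgroup.mem_center_iff.mp hx, mul_inv_cancel_right]
  have hword :
      (mk [(c, p.2)] * x * mk [(c, !p.2)]).toWord = (c, p.2) :: x.toWord ++ [(c, !p.2)] := by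
    conv_lhs => rw [← mk_toWord (x := x)]
    rw [mul_mk, mul_mk, toWord_mk, List.singleton_append, hred.reduce_eq]
  have hlen := congrArg List.length hword
  rw [hconj] at hlen
  simp only [List.length_cons, List.length_append] at hlen
  omega

end FreeGroup

theorem IsFreeGroup.nonempty_mulEquiv_int_of_center_ne_bot {G : Type*} [Group G] [IsFreeGroup G]
    (h : Subgroup.center G ≠ ⊥) : Nonempty (G ≃* Multiplicative ℤ) := by
  obtain ⟨z, hz, hz1⟩ := (Subgroup.bot_or_exists_ne_one _).resolve_left h
  let e := IsFreeGroup.toFreeGroup G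
  have hez : e z ∈ Subgroup.center (FreeGroup (IsFreeGroup.Generators G)) := by
    rw [← SetLike.mem_coe, Subgroup.coe_center] at hz ⊢
    exact MulEquivClass.apply_mem_center e hz
  have hez1 : e z ≠ 1 := (map_ne_one_iff e e.injective).mpr hz1
  have : Subsingleton (IsFreeGroup.Generators G) := by
    by_contra hnt
    rw [not_subsingleton_iff_nontrivial] at hnt
    exact hez1 (by simpa [FreeGroup.center_eq_bot] using hez)
  have : Nonempty (IsFreeGroup.Generators G) := by
    by_contra hem
    rw [not_nonempty_iff] at hem
    exact hez1 (Subsingleton.elim _ _)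
  have : Unique (IsFreeGroup.Generators G) := uniqueOfSubsingleton (Classical.arbitrary _)
  exact ⟨e.trans FreeGroup.mulEquivIntOfUnique⟩

/-- In a free group, every nontrivial element has a centralizer that is an
infinite cyclic group (i.e. isomorphic to `ℤ`). -/
theorem centralizer_of_ne_one_infinite_cyclic {α : Type*} (w : FreeGroup α) (hw : w ≠ 1) :
    Nonempty (Subgroup.centralizer {w} ≃* Multiplicative ℤ) := by
  apply IsFreeGroup.nonempty_mulEquiv_int_of_center_ne_bot
  rw [Subgroup.ne_bot_iff_exists_ne_one]
  refine ⟨⟨⟨w, Subgroup.mem_centralizer_singleton_iff.mpr rfl⟩, ?_⟩, ?_⟩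
  · exact Subgroup.mem_center_iff.mpr fun g =>
      Subtype.ext (Subgroup.mem_centralizer_singleton_iff.mp g.2)
  · simpa [Subtype.ext_iff] using hw
end

section
/- In a free group, if u^n = v^n for some integer n ≥ 1, then u = v (roots are unique). -/
/-- In a free group, roots are unique: `u ^ n = v ^ n` with `n ≥ 1` implies `u = v`. -/
theorem freeGroup_pow_injective {α : Type*} (u v : FreeGroup α) (n : ℕ) (hn : 1 ≤ n)
    (h : u ^ n = v ^ n) : u = v :=
  (pow_left_inj (Nat.one_le_iff_ne_zero.mp hn)).mp h
end

section
/- For every nontrivial element w of a free group there exists a unique element u and a unique positive integer n such that w = u^n and u is not a proper power (i.e. u = v^k with k ≥ 1 implies k = 1). -/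
/-!
By Nielsen–Schreier the centralizer of `w ≠ 1` is a free group, and `w` is a nontrivial element
of its centre. A free group with nontrivial centre has at most one generator: the centre commutes
with each generator `of a`, two commuting elements generate a free abelian (hence cyclic) group, and
`of a` is a root only of itself and its inverse, so a central element is a power of every
generator, which the exponent sums rule out as soon as there are two. Hence the centralizer is
`zpowers g` for some `g` of infinite order. Every root of `w` commutes with `w`, so lies in
`zpowers g`, and the primitive ones are exactly `g` and `g⁻¹`; writing `w = g ^ m`, the primitive
root is `g ^ m.sign` with exponent `m.natAbs`.
-/

/-- `u` is not a proper power. -/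
def FreeGroup.Primitive {α : Type*} (u : FreeGroup α) : Prop :=
  ∀ (v : FreeGroup α) (k : ℕ), 0 < k → u = v ^ k → k = 1

open Subgroup

theorem zpow_right_injective_of_ne_one {G : Type*} [Group G] [IsMulTorsionFree G] {g : G}
    (hg : g ≠ 1) : Function.Injective fun n : ℤ => g ^ n :=
  injective_zpow_iff_not_isOfFinOrder.mpr (not_isOfFinOrder_of_isMulTorsionFree hg)

namespace FreeGroup

variable {ι : Type*}

instance isCyclic_of_subsingleton [Subsingleton ι] : IsCyclic (FreeGroup ι) := by
  rcases isEmpty_or_nonempty ι with _ | ⟨⟨a⟩⟩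
  · infer_instance
  · have := uniqueOfSubsingleton a
    infer_instance

theorem subsingleton_of_isMulCommutative [IsMulCommutative (FreeGroup ι)] : Subsingleton ι := by
  classical
  refine ⟨fun a b => by_contra fun hab => ?_⟩
  let f : ι → Equiv.Perm (Fin 3) := fun x =>
    if x = a then Equiv.swap 0 1 else if x = b then Equiv.swap 1 2 else 1
  have hfa : f a = Equiv.swap 0 1 := if_pos rfl
  have hfb : f b = Equiv.swap 1 2 := (if_neg (Ne.symm hab)).trans (if_pos rfl)
  have h := congrArg (lift f) (mul_comm' (of a) (of b))
  rw [_root_.map_mul, _root_.map_mul, lift_apply_of, lift_apply_of, hfa, hfb] at h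
  exact absurd h (by decide)

def exponentSum [DecidableEq ι] (a : ι) : FreeGroup ι →* Multiplicative ℤ :=
  lift (Pi.mulSingle a (Multiplicative.ofAdd 1))

@[simp]
theorem exponentSum_of [DecidableEq ι] (a b : ι) :
    exponentSum a (of b) = if b = a then Multiplicative.ofAdd 1 else 1 := by
  simp [exponentSum, Pi.mulSingle_apply]

theorem mem_zpowers_of_of_mem_zpowers {a : ι} {z : FreeGroup ι} (h : of a ∈ zpowers z) :
    z ∈ zpowers (of a) := by
  classical
  obtain ⟨q, hq⟩ := mem_zpowers_iff.mp h
  have hunit : q * (exponentSum a z).toAdd = 1 := by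
    simpa using congrArg (fun x => (exponentSum a x).toAdd) hq
  have hqq : q * q = 1 := Int.isUnit_mul_self (IsUnit.of_mul_eq_one _ hunit)
  exact mem_zpowers_iff.mpr ⟨q, by rw [← hq, ← zpow_mul, hqq, zpow_one]⟩

end FreeGroup

namespace IsFreeGroup

variable {G : Type*} [Group G] [IsFreeGroup G]

theorem isCyclic_of_subsingleton_generators [Subsingleton (Generators G)] : IsCyclic G :=
  isCyclic_of_surjective (toFreeGroup G).symm.toMonoidHom (toFreeGroup G).symm.surjective

theorem isCyclic_of_isMulCommutative [IsMulCommutative G] : IsCyclic G := by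
  let e := toFreeGroup G
  have : IsMulCommutative (FreeGroup (Generators G)) :=
    ⟨⟨fun x y => e.symm.injective (by simp only [map_mul, mul_comm'])⟩⟩
  have := FreeGroup.subsingleton_of_isMulCommutative (ι := Generators G)
  exact isCyclic_of_subsingleton_generators

theorem exists_mem_zpowers_of_commute {x y : G} (h : Commute x y) :
    ∃ z, x ∈ zpowers z ∧ y ∈ zpowers z := by
  have : IsMulCommutative (closure {x, y}) := isMulCommutative_closure (by
    rintro a (rfl | rfl) b (rfl | rfl)
    exacts [rfl, h.eq, h.eq.symm, rfl])
  obtain ⟨z, hz⟩ := ((closure {x, y}).isCyclic_iff_exists_zpowers_eq_top).mp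
    isCyclic_of_isMulCommutative
  exact ⟨z, hz ▸ subset_closure (by simp), hz ▸ subset_closure (by simp)⟩

end IsFreeGroup

namespace FreeGroup

variable {ι : Type*}

theorem subsingleton_of_mem_center {c : FreeGroup ι} (hc : c ≠ 1)
    (hcen : c ∈ center (FreeGroup ι)) : Subsingleton ι := by
  classical
  have hroot (d : ι) : c ∈ zpowers (of d) := by
    obtain ⟨z, hcz, hdz⟩ :=
      IsFreeGroup.exists_mem_zpowers_of_commute (mem_center_iff.mp hcen (of d)).symm
    exact zpowers_le.mpr (mem_zpowers_of_of_mem_zpowers hdz) hcz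
  refine ⟨fun a b => by_contra fun hab => hc ?_⟩
  obtain ⟨p, rfl⟩ := mem_zpowers_iff.mp (hroot a)
  obtain ⟨r, hr⟩ := mem_zpowers_iff.mp (hroot b)
  have hp : p = 0 := by
    simpa [Ne.symm hab] using congrArg (fun x => (exponentSum a x).toAdd) hr.symm
  rw [hp, zpow_zero]

end FreeGroup

namespace IsFreeGroup

variable {G : Type*} [Group G] [IsFreeGroup G]

theorem isCyclic_of_mem_center {c : G} (hc : c ≠ 1) (hcen : c ∈ center G) : IsCyclic G := by
  let e := toFreeGroup G
  have := FreeGroup.subsingleton_of_mem_center (c := e c) (by simpa using hc)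
    (mem_center_iff.mpr fun x => e.symm.injective (by simp [mem_center_iff.mp hcen]))
  exact isCyclic_of_subsingleton_generators

theorem exists_centralizer_eq_zpowers {w : G} (hw : w ≠ 1) :
    ∃ g, zpowers g = centralizer {w} := by
  have hwC : w ∈ centralizer {w} := mem_centralizer_singleton_iff.mpr rfl
  refine ((centralizer {w}).isCyclic_iff_exists_zpowers_eq_top).mp
    (isCyclic_of_mem_center (c := ⟨w, hwC⟩) (by simpa using hw) ?_)
  exact mem_center_iff.mpr fun ⟨x, hx⟩ => Subtype.ext (mem_centralizer_singleton_iff.mp hx)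

end IsFreeGroup

namespace FreeGroup

variable {α : Type*}

theorem Primitive.natAbs_eq_one {g : FreeGroup α} {s : ℤ} (h : Primitive (g ^ s)) :
    s.natAbs = 1 := by
  rcases eq_or_ne s 0 with rfl | hs
  · exact absurd (h 1 2 two_pos (by simp)) (by norm_num)
  · refine h (g ^ s.sign) _ (Int.natAbs_pos.mpr hs) ?_
    rw [← zpow_natCast, ← zpow_mul, Int.sign_mul_natAbs]

theorem primitive_zpow {g : FreeGroup α} (hg : g ≠ 1) (hC : centralizer {g} ≤ zpowers g)
    {s : ℤ} (hs : s.natAbs = 1) : Primitive (g ^ s) := by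
  intro v k hk hv
  have hss : s * s = 1 := by rw [← Int.natAbs_mul_self, hs]; rfl
  have hvs : Commute v (g ^ s) := hv ▸ (Commute.refl v).pow_right k
  have hvg : Commute v g := by simpa [← zpow_mul, hss] using hvs.zpow_right s
  obtain ⟨t, rfl⟩ := mem_zpowers_iff.mp (hC (mem_centralizer_singleton_iff.mpr hvg))
  have htk : t * k = s :=
    zpow_right_injective_of_ne_one hg (by simpa [zpow_mul] using hv.symm)
  have := congrArg Int.natAbs htk
  rw [Int.natAbs_mul, hs, Int.natAbs_natCast] at this
  exact Nat.eq_one_of_mul_eq_one_left this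

end FreeGroup

/-- Every nontrivial element `w` of a free group is uniquely `u ^ n` with `n ≥ 1`
and `u` not a proper power. -/
theorem freeGroup_exists_unique_primitive_root {α : Type*} (w : FreeGroup α) (hw : w ≠ 1) :
    ∃ (u : FreeGroup α) (n : ℕ), 0 < n ∧ w = u ^ n ∧ FreeGroup.Primitive u ∧
      ∀ (u' : FreeGroup α) (n' : ℕ), 0 < n' → w = u' ^ n' → FreeGroup.Primitive u' →
        u' = u ∧ n' = n := by
  obtain ⟨g, hC⟩ := IsFreeGroup.exists_centralizer_eq_zpowers hw
  obtain ⟨m, rfl⟩ := mem_zpowers_iff.mp (hC ▸ mem_centralizer_singleton_iff.mpr rfl)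
  have hg : g ≠ 1 := by rintro rfl; simp at hw
  have hm : m ≠ 0 := by rintro rfl; simp at hw
  have hCg : centralizer {g} ≤ zpowers g := fun x hx => hC ▸
    mem_centralizer_singleton_iff.mpr
      (Commute.zpow_right (mem_centralizer_singleton_iff.mp hx) m)
  refine ⟨g ^ m.sign, m.natAbs, Int.natAbs_pos.mpr hm, ?_,
    FreeGroup.primitive_zpow hg hCg (Int.natAbs_sign_of_ne_zero hm), ?_⟩
  · rw [← zpow_natCast, ← zpow_mul, Int.sign_mul_natAbs]
  rintro u' n' hn' hw' hu'
  have hu'C : u' ∈ centralizer {g ^ m} :=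
    hw' ▸ mem_centralizer_singleton_iff.mpr ((Commute.refl u').pow_right n')
  obtain ⟨s, rfl⟩ := mem_zpowers_iff.mp (hC ▸ hu'C)
  have hs := hu'.natAbs_eq_one
  have hm' : m = s * n' := zpow_right_injective_of_ne_one hg (by simpa [zpow_mul] using hw')
  subst hm'
  have hsign : s.sign = s := by simpa [hs] using Int.sign_mul_natAbs s
  simp [Int.sign_mul, Int.natAbs_mul, hs, hsign, Int.sign_natCast_of_ne_zero hn'.ne']
end

section
/- If c is a cyclically reduced element of a free group of word length n ≥ 1 and g * c * g⁻¹ is also cyclically reduced, then g * c * g⁻¹ is a cyclic rotation of the word c; in particular it has the same word length n. -/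
/-- An element of a free group is cyclically reduced if the concatenation of its
reduced word with itself is still reduced. -/
def FreeGroup.IsCyclicallyReducedElt {α : Type*} [DecidableEq α] (w : FreeGroup α) : Prop :=
  FreeGroup.reduce (w.toWord ++ w.toWord) = w.toWord ++ w.toWord

/-!
Peel off the last letter `x` of the conjugator `g`. If `x⁻¹` is the first letter of `c` or `x`
its last letter, then `x c x⁻¹` is a rotation of `c`, hence again cyclically reduced, and
induction applies. Otherwise nothing cancels in `g c g⁻¹`, whose reduced word then begins and
ends with mutually inverse letters, so it is not cyclically reduced.
-/

namespace FreeGroup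

open List

variable {α : Type*}

theorem isReduced_append_self_iff {L : List (α × Bool)} :
    IsReduced (L ++ L) ↔ IsCyclicallyReduced L := by
  rw [IsReduced, isChain_append, and_self_left]
  rfl

theorem IsCyclicallyReduced.append_comm {A B : List (α × Bool)}
    (h : IsCyclicallyReduced (A ++ B)) : IsCyclicallyReduced (B ++ A) := by
  rw [← isReduced_append_self_iff]
  exact (h.flatten_replicate 3).isReduced.infix ⟨A, B, by simp⟩

theorem IsReduced.invRev {L : List (α × Bool)} (h : IsReduced L) :
    IsReduced (FreeGroup.invRev L) := by
  classical
  have := isReduced_toWord (x := (mk L)⁻¹)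
  rwa [toWord_inv, toWord_mk, h.reduce_eq] at this

theorem fst_eq_imp_snd_eq_iff_ne_left {a b : α × Bool} :
    (a.1 = b.1 → a.2 = b.2) ↔ a ≠ (b.1, !b.2) := by
  obtain ⟨a₁, _ | _⟩ := a <;> obtain ⟨b₁, _ | _⟩ := b <;> simp [eq_comm]

theorem fst_eq_imp_snd_eq_iff_ne_right {a b : α × Bool} :
    (a.1 = b.1 → a.2 = b.2) ↔ b ≠ (a.1, !a.2) := by
  obtain ⟨a₁, _ | _⟩ := a <;> obtain ⟨b₁, _ | _⟩ := b <;> simp [eq_comm]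

theorem IsReduced.append_append_invRev {W M : List (α × Bool)} {x : α × Bool}
    (hW : IsReduced (W ++ [x])) (hM : IsReduced M) (hM₀ : M ≠ [])
    (hhead : M.head? ≠ some (x.1, !x.2)) (hlast : M.getLast? ≠ some x) :
    IsReduced (W ++ [x] ++ M ++ FreeGroup.invRev (W ++ [x])) := by
  have hxM : IsReduced (W ++ [x] ++ M) := by
    refine isChain_append.2 ⟨hW, hM, ?_⟩
    intro a ha b hb
    rw [getLast?_concat, Option.mem_some_iff] at ha
    subst ha
    rw [fst_eq_imp_snd_eq_iff_ne_right]
    rintro rfl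
    exact hhead hb
  refine isChain_append.2 ⟨hxM, hW.invRev, ?_⟩
  intro a ha b hb
  rw [getLast?_append_of_ne_nil _ hM₀] at ha
  have hb' : b = (x.1, !x.2) := by simpa [FreeGroup.invRev, eq_comm] using hb
  subst hb'
  rw [fst_eq_imp_snd_eq_iff_ne_left, Bool.not_not]
  rintro rfl
  exact hlast ha

variable [DecidableEq α]

theorem isCyclicallyReducedElt_iff {w : FreeGroup α} :
    w.IsCyclicallyReducedElt ↔ IsCyclicallyReduced w.toWord := by
  rw [IsCyclicallyReducedElt, ← isReduced_iff_reduce_eq, isReduced_append_self_iff]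

theorem IsCyclicallyReduced.toWord_conj_mk {c : FreeGroup α} {A B : List (α × Bool)}
    (hc : IsCyclicallyReduced c.toWord) (h : c.toWord = A ++ B) :
    ((mk A)⁻¹ * c * mk A).toWord = B ++ A := by
  have hconj : (mk A)⁻¹ * c * mk A = mk (B ++ A) := by
    rw [← mk_toWord (x := c), h, ← mul_mk, ← mul_mk]
    group
  rw [h] at hc
  rw [hconj, toWord_mk, hc.append_comm.isReduced.reduce_eq]

theorem not_isCyclicallyReduced_toWord_conj {W : List (α × Bool)} {c : FreeGroup α}
    (hW : W ≠ []) (h : IsReduced (W ++ c.toWord ++ invRev W)) :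
    ¬ IsCyclicallyReduced (mk W * c * (mk W)⁻¹).toWord := by
  obtain ⟨a, W', rfl⟩ := exists_cons_of_ne_nil hW
  rw [← mk_toWord (x := c), inv_mk, mul_mk, mul_mk, toWord_mk, h.reduce_eq]
  intro hcyc
  simpa using hcyc.2 (a.1, !a.2) (by simp [FreeGroup.invRev, getLast?_cons]) a (by simp) rfl

theorem IsCyclicallyReduced.conj_mk_singleton {c : FreeGroup α} (hc : IsCyclicallyReduced c.toWord)
    {x : α × Bool} (hx : c.toWord.head? = some (x.1, !x.2) ∨ c.toWord.getLast? = some x) :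
    c.toWord ~r (mk [x] * c * (mk [x])⁻¹).toWord ∧
      IsCyclicallyReduced (mk [x] * c * (mk [x])⁻¹).toWord := by
  suffices ∃ A B, c.toWord = A ++ B ∧ mk [x] * c * (mk [x])⁻¹ = (mk A)⁻¹ * c * mk A by
    obtain ⟨A, B, hAB, hconj⟩ := this
    rw [hconj, hc.toWord_conj_mk hAB, hAB]
    rw [hAB] at hc
    exact ⟨isRotated_append, hc.append_comm⟩
  rcases hx with hhead | hlast
  · obtain ⟨t, ht⟩ := head?_eq_some_iff.1 hhead
    refine ⟨[(x.1, !x.2)], t, ht, ?_⟩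
    simp [inv_mk, FreeGroup.invRev]
  · obtain ⟨t, ht⟩ := getLast?_eq_some_iff.1 hlast
    refine ⟨t, [x], ht, ?_⟩
    rw [← mk_toWord (x := c), ht, ← mul_mk]
    group

theorem isRotated_toWord_conj_mk {L : List (α × Bool)} (hL : IsReduced L) {c : FreeGroup α}
    (hc : IsCyclicallyReduced c.toWord) (hc₁ : c ≠ 1)
    (h : IsCyclicallyReduced (mk L * c * (mk L)⁻¹).toWord) :
    c.toWord ~r (mk L * c * (mk L)⁻¹).toWord := by
  induction L using List.reverseRecOn generalizing c with
  | nil => simp [← one_eq_mk, IsRotated.refl]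
  | append_singleton L x ih =>
    by_cases hcancel : c.toWord.head? = some (x.1, !x.2) ∨ c.toWord.getLast? = some x
    · obtain ⟨hrot, hcyc⟩ := hc.conj_mk_singleton hcancel
      have hconj : mk (L ++ [x]) * c * (mk (L ++ [x]))⁻¹ =
          mk L * (mk [x] * c * (mk [x])⁻¹) * (mk L)⁻¹ := by
        rw [← mul_mk]
        group
      have hc'₁ : mk [x] * c * (mk [x])⁻¹ ≠ 1 := by
        rwa [Ne, mul_inv_eq_one, mul_eq_left]
      rw [hconj] at h ⊢
      exact hrot.trans (ih (hL.infix ⟨[], [x], by simp⟩) hcyc hc'₁ h)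
    · push Not at hcancel
      have hc₀ : c.toWord ≠ [] := by rwa [Ne, toWord_eq_nil_iff]
      exact absurd h (not_isCyclicallyReduced_toWord_conj (by simp)
        (hL.append_append_invRev hc.isReduced hc₀ hcancel.1 hcancel.2))

end FreeGroup

/-- If `c` is cyclically reduced of length `n ≥ 1` and a conjugate `g * c * g⁻¹` is also
cyclically reduced, then `g * c * g⁻¹` is a cyclic rotation of the word `c`; in particular
it has the same word length. -/
theorem freeGroup_conj_cyclicallyReduced_is_rotation {α : Type*} [DecidableEq α]
    (c g : FreeGroup α) (n : ℕ) (hn : 1 ≤ n) (hlen : c.toWord.length = n)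
    (hc : FreeGroup.IsCyclicallyReducedElt c)
    (hconj : FreeGroup.IsCyclicallyReducedElt (g * c * g⁻¹)) :
    (∃ k, k < n ∧ (g * c * g⁻¹).toWord = c.toWord.rotate k) ∧
      (g * c * g⁻¹).toWord.length = n := by
  rw [FreeGroup.isCyclicallyReducedElt_iff] at hc hconj
  have hc₁ : c ≠ 1 := by
    rintro rfl
    rw [FreeGroup.toWord_one, List.length_nil] at hlen
    omega
  obtain ⟨k, hk⟩ : c.toWord ~r (g * c * g⁻¹).toWord := by
    rw [← FreeGroup.mk_toWord (x := g)] at hconj ⊢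
    exact FreeGroup.isRotated_toWord_conj_mk FreeGroup.isReduced_toWord hc hc₁ hconj
  exact ⟨⟨k % n, Nat.mod_lt _ hn, by rw [← hk, ← hlen, List.rotate_mod]⟩,
    by rw [← hk, List.length_rotate, hlen]⟩
end

section
/- Let letters of a free group carry a linear order, inducing the lexicographic order on reduced words of equal length. If a nonempty cyclically reduced word w of length n satisfies: w is strictly smaller than each of its nontrivial cyclic rotations, and w = x ++ y ++ x as a concatenation of words with x nonempty, then the word x ++ y is lexicographically strictly smaller than y ++ x. -/
/-- A word over an alphabet `β` equipped with a formal inversion `inv` is cyclically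
reduced if no two adjacent letters cancel and its first and last letters do not cancel. -/
def Word.IsCyclicallyReduced {β : Type*} (inv : β → β) (w : List β) : Prop :=
  w.Chain' (fun a b => b ≠ inv a) ∧
    ∀ a b, w.head? = some a → w.getLast? = some b → a ≠ inv b

private lemma lex_append_aux {β : Type*} (r : β → β → Prop) :
    ∀ (a b s t : List β), a.length = b.length → List.Lex r (a ++ s) (b ++ t) →
      a = b ∨ List.Lex r a b := by
  intro a
  induction a with
  | nil => intro b _ _ h _; left; exact (List.length_eq_zero_iff.mp h.symm).symm
  | cons c a ih =>
    intro b s t hlen hlex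
    cases b with
    | nil => simp at hlen
    | cons d b =>
      simp only [List.cons_append] at hlex
      cases hlex with
      | rel h => right; exact List.Lex.rel h
      | cons h =>
        rcases ih b s t (by simpa using hlen) h with h' | h'
        · left; rw [h']
        · right; exact List.Lex.cons h'

/-- If a nonempty cyclically reduced word `w` is lexicographically strictly smaller than
each of its nontrivial cyclic rotations and `w = x ++ y ++ x` with `x` nonempty, then
`x ++ y` is lexicographically strictly smaller than `y ++ x`. -/
theorem word_min_rotation_overlap {β : Type*} [LinearOrder β] (inv : β → β)
    (w x y : List β) (hw : w ≠ []) (hcyc : Word.IsCyclicallyReduced inv w)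
    (hmin : ∀ k, 0 < k → k < w.length → List.Lex (· < ·) w (w.rotate k))
    (hsplit : w = x ++ y ++ x) (hx : x ≠ []) :
    List.Lex (· < ·) (x ++ y) (y ++ x) := by
  have hxpos : 0 < x.length := List.length_pos_iff.mpr hx
  have hlen : w.length = x.length + y.length + x.length := by
    simp [hsplit]; ring
  have hklt : x.length < w.length := by omega
  have hrot : w.rotate x.length = (y ++ x) ++ x := by
    rw [hsplit, List.rotate_eq_drop_append_take (by simp)]
    simp
  have hlex := hmin x.length hxpos hklt
  rw [hrot, hsplit] at hlex
  rcases lex_append_aux _ (x ++ y) (y ++ x) x x (by simp; omega) hlex with h | h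
  · rw [h] at hlex
    exact absurd hlex (irrefl_of (List.Lex (· < ·)) _)
  · exact h
end

section
/- For a nonempty word w over a linearly ordered alphabet: if w is lexicographically minimal (not necessarily strictly) among all its cyclic rotations and w = v^k (k-fold concatenation) with k maximal, then every cyclic rotation of w that equals w is a rotation by a multiple of the length of v. -/
private lemma rot_mul {β : Type*} (w : List β) {p : ℕ} (h : w.rotate p = w) (c : ℕ) :
    w.rotate (c * p) = w := by
  induction c with
  | zero => simp
  | succ c ih => rw [Nat.succ_mul, ← List.rotate_rotate, ih, h]

private lemma rot_mod {β : Type*} (w : List β) {m p : ℕ} (h : w.rotate m = w)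
    (hp : w.rotate p = w) : w.rotate (m % p) = w := by
  have h1 : (w.rotate (p * (m / p))).rotate (m % p) = w.rotate m := by
    rw [List.rotate_rotate, Nat.div_add_mod]
  rw [mul_comm, rot_mul w hp] at h1
  exact h1.trans h

private lemma periodic_pow {β : Type*} {p : ℕ} (hp : 0 < p) :
    ∀ (j : ℕ) (w : List β), w.length = j * p → w.rotate p = w →
      w = (List.replicate j (w.take p)).flatten := by
  intro j
  induction j with
  | zero => intro w hlen _; simp [List.length_eq_zero_iff.mp (by simpa using hlen)]
  | succ j ih =>
    intro w hlen hrot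
    have hple : p ≤ w.length := by
      rw [hlen, Nat.succ_mul]; exact Nat.le_add_left _ _
    set t := w.take p with ht
    set d := w.drop p with hd
    have htlen : t.length = p := by simp [ht, hple]
    have hw' : t ++ d = w := List.take_append_drop p w
    have hdt : d ++ t = w := by
      rw [← List.rotate_eq_drop_append_take hple, hrot]
    have hcomm : t ++ d = d ++ t := hw'.trans hdt.symm
    have hdlen : d.length = j * p := by
      simp [hd, hlen, Nat.succ_mul]
    rcases Nat.eq_zero_or_pos j with hj | hj
    · subst hj
      have hd0 : d = [] := List.length_eq_zero_iff.mp (by simp [hdlen])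
      rw [← hw', hd0]
      simp
    · have hpd : p ≤ d.length := by
        rw [hdlen]; exact Nat.le_mul_of_pos_left _ hj
      have htake : d.take p = t := by
        have h1 : (d ++ t).take p = d.take p := by
          rw [List.take_append, Nat.sub_eq_zero_of_le hpd, List.take_zero,
            List.append_nil]
        have h2 : (t ++ d).take p = t := List.take_left' htlen
        rw [← hcomm, h2] at h1; exact h1.symm
      have hdrot : d.rotate p = d := by
        have h1 : (d ++ t).drop p = d.drop p ++ t := by
          rw [List.drop_append, Nat.sub_eq_zero_of_le hpd, List.drop_zero]
        have h2 : (t ++ d).drop p = d := List.drop_left' htlen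
        rw [List.rotate_eq_drop_append_take hpd, htake, ← h1, ← hcomm, h2]
      have hdrep := ih d hdlen hdrot
      rw [htake] at hdrep
      rw [← hw', hdrep, List.replicate_succ, List.flatten_cons]

/-- If a nonempty word `w` is lexicographically minimal among all its cyclic rotations
and `w = v ^ k` (k-fold concatenation) with `k` maximal, then every cyclic rotation of
`w` equal to `w` is a rotation by a multiple of the length `w.length / k` of `v`. -/
theorem word_rotation_fix_period {β : Type*} [LinearOrder β] (w v : List β) (k : ℕ)
    (hw : w ≠ []) (hpow : w = (List.replicate k v).flatten)
    (hmax : ∀ (k' : ℕ) (v' : List β), w = (List.replicate k' v').flatten → k' ≤ k)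
    (hmin : ∀ m, m < w.length → ¬ List.Lex (· < ·) (w.rotate m) w) :
    ∀ m, m < w.length → w.rotate m = w → (w.length / k) ∣ m := by
  intro m hm hrot
  have hn : 0 < w.length := List.length_pos_iff.mpr hw
  have hlenw : w.length = k * v.length := by
    rw [hpow]; simp [List.length_flatten, mul_comm]
  have hv : v ≠ [] := by
    rintro rfl; apply hw; simpa using hpow
  have hvpos : 0 < v.length := List.length_pos_iff.mpr hv
  have hk : 0 < k := by
    rcases Nat.eq_zero_or_pos k with h | h
    · exfalso; apply hw; rw [hpow, h]; simp
    · exact h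
  obtain ⟨k', rfl⟩ : ∃ k', k = k' + 1 := ⟨k - 1, by omega⟩
  -- rotation by v.length fixes w
  have hrotv : w.rotate v.length = w := by
    have hsplit : w = v ++ (List.replicate k' v).flatten := by
      conv_lhs => rw [hpow]
      rw [List.replicate_succ, List.flatten_cons]
    have hvle : v.length ≤ w.length := by
      rw [hlenw]; exact Nat.le_mul_of_pos_left _ hk
    rw [List.rotate_eq_drop_append_take hvle]
    have hdrop : w.drop v.length = (List.replicate k' v).flatten := by
      conv_lhs => rw [hsplit]; simp
    have htake : w.take v.length = v := by
      conv_lhs => rw [hsplit]; simp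
    rw [hdrop, htake, hpow, List.replicate_succ', List.flatten_append]
    simp
  -- the minimal positive period
  have hex : ∃ q, 0 < q ∧ w.rotate q = w := ⟨w.length, hn, List.rotate_length w⟩
  obtain ⟨hppos, hprot⟩ : 0 < Nat.find hex ∧ w.rotate (Nat.find hex) = w := Nat.find_spec hex
  set p := Nat.find hex with hpdef
  have hdvd : ∀ m', w.rotate m' = w → p ∣ m' := by
    intro m' hm'
    have hr : w.rotate (m' % p) = w := rot_mod w hm' hprot
    rcases Nat.eq_zero_or_pos (m' % p) with h0 | h0
    · exact Nat.dvd_of_mod_eq_zero h0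
    · exact absurd ⟨h0, hr⟩ (Nat.find_min hex (Nat.mod_lt _ hppos))
  have hpn : p ∣ w.length := hdvd _ (List.rotate_length w)
  have hpv : p ∣ v.length := hdvd _ hrotv
  have hple : p ≤ v.length := Nat.le_of_dvd hvpos hpv
  have hper := periodic_pow hppos (w.length / p) w (Nat.div_mul_cancel hpn).symm hprot
  have hkle : w.length / p ≤ k' + 1 := hmax _ _ hper
  have hnk : w.length = (k' + 1) * p := by
    have h1 : w.length ≤ (k' + 1) * p := by
      calc w.length = (w.length / p) * p := (Nat.div_mul_cancel hpn).symm
        _ ≤ (k' + 1) * p := Nat.mul_le_mul_right _ hkle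
    have h2 : (k' + 1) * p ≤ w.length := by
      rw [hlenw]; exact Nat.mul_le_mul_left _ hple
    omega
  have hq : w.length / (k' + 1) = p := by
    rw [hnk, Nat.mul_div_cancel_left _ hk]
  rw [hq]
  exact hdvd m hrot
end
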